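/- Let K be an algebraically closed field of characteristic p > 0. Let n, m be positive integers and let ζ, η ∈ K[[t]] be nonzero power series satisfying the minimality condition with respect to n and to m respectively. Let f and g be distinct monic polynomials with coefficients in K[[x]] of degrees n and m with f(t^n, ζ(t)) = 0 and g(t^m, η(t)) = 0. Let N := lcm(n,m), set D(ρ) := ord_s( (rescale_ρ ζ)(s^{N/n}) − η(s^{N/m}) ) for ρ ∈ U_n, and let α := (1/N)·max{ ord_s( (rescale_ρ ζ)(s^{N/n}) − (rescale_σ η)(s^{N/m}) ) : ρ ∈ U_n, σ ∈ U_m } be the order of coincidence of the two branches (a finite positive rational). Let b_j, e_j be the characteristic data of ζ with respect to n and let r be the unique index with b_r/n < α ≤ b_{r+1}/n. Then: (a) for every j ∈ {1,…,r}, the number of ρ ∈ U_n with D(ρ) = N·b_j/n equals e_{j−1}[:p] − e_j[:p]; (b) the number of ρ ∈ U_n with D(ρ) = N·α equals e_r[:p]. -/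

import Mathlib

/-!
Substituting `t ↦ τ t` with `τ ^ (N/m) = σ⁻¹` preserves orders, so the maximal contact `a` is
attained by some conjugate `ρ₁` of `ζ` against `η` itself. For an `n`-th root of unity `x`, split
the difference for `ρ₁ x` as `[ζ(ρ₁ x t) - ζ(ρ₁ t)] + [ζ(ρ₁ t) - η]` (after expansion): the second
term has order exactly `a` and the sum has order at most `a` by maximality, so the sum has order
`min (N/n · v(x), a)`, where `v(x)` is the least exponent `i` in the support of `ζ` with
`x ^ i ≠ 1`. By construction of the characteristic sequence, `v(x) > b_j` exactly when
`x ^ e_j = 1`, so the two sets to be counted are `ρ₁ (μ_{e_{j-1}} \ μ_{e_j})` and `ρ₁ μ_{e_r}`.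
Finally `#μ_d = d[:p]`: the Frobenius is injective, and for `p ∤ d` there is a primitive `d`-th
root of unity.
-/

open scoped Classical

noncomputable section

namespace PaperStmt

/-- The formal partial derivative `∂_i f` of a formal power series in two variables:
its coefficient at a monomial `m` is `(m i + 1)` times the coefficient of `f` at
`m + eᵢ`. -/
def pderiv (K : Type*) [Field K] (i : Fin 2) (f : MvPowerSeries (Fin 2) K) :
    MvPowerSeries (Fin 2) K :=
  fun m => ((m i + 1 : ℕ) : K) * MvPowerSeries.coeff (m + Finsupp.single i 1) f

/-- The intersection number `I(f,g) := dim_K K[[X,Y]]/(f,g)`. -/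
def inum (K : Type*) [Field K] (f g : MvPowerSeries (Fin 2) K) : ℕ :=
  Module.finrank K (MvPowerSeries (Fin 2) K ⧸ Ideal.span {f, g})

/-- The Milnor number `μ(f) := dim_K K[[X,Y]]/(∂_X f, ∂_Y f)`. -/
def milnor (K : Type*) [Field K] (f : MvPowerSeries (Fin 2) K) : ℕ :=
  inum K (pderiv K 0 f) (pderiv K 1 f)

/-- `ζ ∈ K[[t]]` satisfies the minimality condition with respect to `n`: the only
positive integer dividing both `n` and every element of the support of `ζ` is `1`. -/
def MinimalDenom (K : Type*) [Field K] (n : ℕ) (ζ : PowerSeries K) : Prop :=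
  ∀ d : ℕ, d ∣ n → (∀ j : ℕ, PowerSeries.coeff j ζ ≠ 0 → d ∣ j) → d = 1

/-- `b`, `e` are the characteristic data of `ζ` with respect to `n`, with `h` steps:
`e 0 = n`, `b 0 = 0`, for `j < h` the number `b (j+1)` is the least element of the
support of `ζ` not divisible by `e j` and `e (j+1) = gcd (e j) (b (j+1))`;
the process stops exactly at `h`, i.e. `e h = 1` and `e j ≠ 1` for `j < h`. -/
def CharData (K : Type*) [Field K] (n : ℕ) (ζ : PowerSeries K) (h : ℕ)
    (b e : ℕ → ℕ) : Prop :=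
  e 0 = n ∧ b 0 = 0 ∧ (∀ j, j < h → e j ≠ 1) ∧ e h = 1 ∧
  (∀ j, j < h →
    IsLeast {k : ℕ | PowerSeries.coeff k ζ ≠ 0 ∧ ¬ e j ∣ k} (b (j + 1))) ∧
  (∀ j, j < h → e (j + 1) = Nat.gcd (e j) (b (j + 1)))

/-- `expandPS K n φ = φ(t^n)`: the image of `φ` under the (continuous) `K`-algebra
homomorphism `K[[x]] → K[[t]]` sending `x` to `t^n`. -/
def expandPS (K : Type*) [Field K] (n : ℕ) (φ : PowerSeries K) : PowerSeries K :=
  PowerSeries.mk fun j => if n ∣ j then PowerSeries.coeff (j / n) φ else 0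

/-- A polynomial in `Y` with coefficients in `K[[X]]`, viewed as an element
of `K[[X,Y]]`. -/
def polyToMv (K : Type*) [Field K] (q : Polynomial (PowerSeries K)) :
    MvPowerSeries (Fin 2) K :=
  fun m => PowerSeries.coeff (m 0) (q.coeff (m 1))

/-- `f(t^n, ζ(t)) = 0`: the series `ζ` is a root of the polynomial obtained from `f`
by mapping its coefficients through the `K`-algebra homomorphism `K[[x]] → K[[t]]`
sending `x` to `t^n`. -/
def IsNPRoot (K : Type*) [Field K] (n : ℕ) (f : Polynomial (PowerSeries K))
    (ζ : PowerSeries K) : Prop :=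
  ∑ i ∈ Finset.range (f.natDegree + 1), expandPS K n (f.coeff i) * ζ ^ i = 0

/-- `nuFun K n ζ H = H(t^n, ζ(t))`: the image of `H ∈ K[[X,Y]]` under the continuous
`K`-algebra homomorphism `K[[X,Y]] → K[[t]]` sending `X ↦ t^n` and `Y ↦ ζ(t)`
(for `1 ≤ n` and `ζ(0) = 0`). -/
def nuFun (K : Type*) [Field K] (n : ℕ) (ζ : PowerSeries K)
    (H : MvPowerSeries (Fin 2) K) : PowerSeries K :=
  PowerSeries.mk fun k =>
    ∑ a ∈ Finset.range (k + 1), ∑ c ∈ Finset.range (k + 1),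
      if n * a ≤ k then
        MvPowerSeries.coeff (Finsupp.single 0 a + Finsupp.single 1 c) H *
          PowerSeries.coeff (k - n * a) (ζ ^ c)
      else 0

/-- `n[:p] = n · p^{-ν_p(n)}`, the part of `n` coprime to `p`. -/
def coprimePart (p n : ℕ) : ℕ := n / p ^ padicValNat p n

open PowerSeries

lemma order_add_eq_min_of_order_add_le {R : Type*} [Semiring R] {φ ψ : PowerSeries R}
    (h : (φ + ψ).order ≤ ψ.order) : (φ + ψ).order = min φ.order ψ.order := by
  refine le_antisymm (le_min ?_ h) (min_order_le_order_add φ ψ)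
  rcases lt_or_ge φ.order ψ.order with hlt | hle
  · rw [order_add_of_order_ne _ _ hlt.ne, min_eq_left hlt.le]
  · exact h.trans hle

section PowerSeries

variable {K : Type*} [Field K]

lemma coeff_expandPS (c j : ℕ) (φ : PowerSeries K) :
    coeff j (expandPS K c φ) = if c ∣ j then coeff (j / c) φ else 0 := by
  simp [expandPS]

lemma expandPS_sub (c : ℕ) (φ ψ : PowerSeries K) :
    expandPS K c (φ - ψ) = expandPS K c φ - expandPS K c ψ := by
  ext j
  simp only [map_sub, coeff_expandPS]
  split <;> simp

lemma rescale_expandPS (c : ℕ) (τ : K) (φ : PowerSeries K) :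
    rescale τ (expandPS K c φ) = expandPS K c (rescale (τ ^ c) φ) := by
  ext j
  rw [coeff_rescale, coeff_expandPS, coeff_expandPS]
  split
  · rw [coeff_rescale, ← pow_mul, Nat.mul_div_cancel' ‹c ∣ j›]
  · rw [mul_zero]

lemma natCast_le_order_expandPS_iff {c : ℕ} (hc : 0 < c) (φ : PowerSeries K) (k : ℕ) :
    (k : ℕ∞) ≤ (expandPS K c φ).order ↔ ∀ i, c * i < k → coeff i φ = 0 := by
  constructor
  · intro hk i hi
    have := coeff_of_lt_order (c * i) (lt_of_lt_of_le (by exact_mod_cast hi) hk)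
    rwa [coeff_expandPS, if_pos (dvd_mul_right c i), Nat.mul_div_cancel_left i hc] at this
  · intro hφ
    refine nat_le_order _ k fun j hj => ?_
    rw [coeff_expandPS]
    split
    · obtain ⟨i, rfl⟩ := ‹c ∣ j›
      rw [Nat.mul_div_cancel_left i hc]
      exact hφ i hj
    · rfl

lemma natCast_le_order_expandPS_rescale_sub_iff {c : ℕ} (hc : 0 < c) {ρ : K} (hρ : ρ ≠ 0)
    (ζ : PowerSeries K) (x : K) (k : ℕ) :
    (k : ℕ∞) ≤ (expandPS K c (rescale (ρ * x) ζ - rescale ρ ζ)).order ↔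
      ∀ i, coeff i ζ ≠ 0 → c * i < k → x ^ i = 1 := by
  rw [natCast_le_order_expandPS_iff hc]
  refine forall_congr' fun i => ?_
  have hcoeff : coeff i (rescale (ρ * x) ζ - rescale ρ ζ) = ρ ^ i * ((x ^ i - 1) * coeff i ζ) := by
    rw [map_sub, coeff_rescale, coeff_rescale, mul_pow]
    ring
  rw [hcoeff, mul_eq_zero, mul_eq_zero, sub_eq_zero]
  simp only [pow_ne_zero i hρ, false_or]
  tauto

lemma order_rescale_of_ne_zero {τ : K} (hτ : τ ≠ 0) (φ : PowerSeries K) :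
    (rescale τ φ).order = φ.order := by
  refine le_antisymm (le_order _ _ fun i hi => ?_) (le_order _ _ fun i hi => ?_)
  · rw [← mul_right_inj' (pow_ne_zero i hτ), ← coeff_rescale, coeff_of_lt_order i hi, mul_zero]
  · rw [coeff_rescale, coeff_of_lt_order i hi, mul_zero]

lemma exists_order_expandPS_sub_eq_of_rescale [IsAlgClosed K] {n m c d : ℕ}
    (hcd : c * n = d * m) (hd : 0 < d) (hm : 0 < m) (ζ η : PowerSeries K) (ρ : K) {σ : K}
    (hσ : σ ^ m = 1) :
    ∃ ρ' : K, ρ' ^ n = ρ ^ n ∧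
      (expandPS K c (rescale ρ' ζ) - expandPS K d η).order =
        (expandPS K c (rescale ρ ζ) - expandPS K d (rescale σ η)).order := by
  have hσ0 : σ ≠ 0 := (IsUnit.of_pow_eq_one hσ hm.ne').ne_zero
  obtain ⟨τ, hτ⟩ := IsAlgClosed.exists_pow_nat_eq σ⁻¹ hd
  have hτ0 : τ ≠ 0 := by
    rintro rfl
    exact inv_ne_zero hσ0 (by rw [← hτ, zero_pow hd.ne'])
  refine ⟨τ ^ c * ρ, ?_, ?_⟩
  · rw [mul_pow, ← pow_mul, hcd, pow_mul, hτ, inv_pow, hσ, inv_one, one_mul]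
  · rw [← order_rescale_of_ne_zero hτ0 (expandPS K c (rescale ρ ζ) - _), map_sub, rescale_expandPS, rescale_expandPS,
      rescale_rescale, rescale_rescale, hτ, mul_inv_cancel₀ hσ0, rescale_one, RingHom.id_apply,
      mul_comm ρ]

lemma exists_rescale_order_sub_eq_min [IsAlgClosed K] {n m c d : ℕ} (hcd : c * n = d * m)
    (hn : 0 < n) (hm : 0 < m) (hd : 0 < d) {ζ η : PowerSeries K} {a : ℕ∞}
    (hmax : IsGreatest {o : ℕ∞ | ∃ ρ σ : K, ρ ^ n = 1 ∧ σ ^ m = 1 ∧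
      (expandPS K c (rescale ρ ζ) - expandPS K d (rescale σ η)).order = o} a) :
    ∃ ρ₁ : K, ρ₁ ^ n = 1 ∧ ρ₁ ≠ 0 ∧ ∀ x : K, x ^ n = 1 →
      (expandPS K c (rescale (ρ₁ * x) ζ) - expandPS K d η).order =
        min (expandPS K c (rescale (ρ₁ * x) ζ - rescale ρ₁ ζ)).order a := by
  obtain ⟨⟨ρ₀, σ₀, hρ₀, hσ₀, hD₀⟩, hub⟩ := hmax
  obtain ⟨ρ₁, hρ₁, hD₁⟩ := exists_order_expandPS_sub_eq_of_rescale hcd hd hm ζ η ρ₀ hσ₀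
  rw [hρ₀] at hρ₁
  rw [hD₀] at hD₁
  refine ⟨ρ₁, hρ₁, (IsUnit.of_pow_eq_one hρ₁ hn.ne').ne_zero, fun x hx => ?_⟩
  have hsplit : expandPS K c (rescale (ρ₁ * x) ζ) - expandPS K d η =
      expandPS K c (rescale (ρ₁ * x) ζ - rescale ρ₁ ζ) +
        (expandPS K c (rescale ρ₁ ζ) - expandPS K d η) := by
    rw [expandPS_sub, sub_add_sub_cancel]
  rw [hsplit, order_add_eq_min_of_order_add_le, hD₁]
  rw [← hsplit, hD₁]
  exact hub ⟨ρ₁ * x, 1, by rw [mul_pow, hρ₁, hx, one_mul], one_pow m,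
    by rw [rescale_one, RingHom.id_apply]⟩

end PowerSeries

section RootsOfUnity

variable {K : Type*} [Field K]

lemma ncard_setOf_pow_eq_one_and_mul {n : ℕ} {ρ : K} (hρ0 : ρ ≠ 0) (hρ : ρ ^ n = 1)
    (Q : K → Prop) : {x | x ^ n = 1 ∧ Q (ρ * x)}.ncard = {y | y ^ n = 1 ∧ Q y}.ncard := by
  convert Set.ncard_preimage_of_injective_subset_range (mul_right_injective₀ hρ0) ?_ using 2
  · ext x
    simp [mul_pow, hρ]
  · exact fun y _ => ⟨ρ⁻¹ * y, by simp [hρ0]⟩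

lemma finite_setOf_pow_eq_one {d : ℕ} (hd : 0 < d) : {x : K | x ^ d = 1}.Finite :=
  (Polynomial.nthRootsFinset d (1 : K)).finite_toSet.subset fun x hx => by
    simpa [Polynomial.mem_nthRootsFinset hd] using hx

lemma pow_eq_one_of_dvd {x : K} {d d' : ℕ} (hdd' : d ∣ d') (hx : x ^ d = 1) : x ^ d' = 1 := by
  obtain ⟨k, rfl⟩ := hdd'
  rw [pow_mul, hx, one_pow]

variable (p : ℕ) [hp : Fact p.Prime]

lemma coprimePart_eq_ordCompl (d : ℕ) : coprimePart p d = ordCompl[p] d := by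
  rw [coprimePart, Nat.factorization_def d hp.out]

variable [CharP K p]

lemma pow_coprimePart_eq_one_iff (d : ℕ) (x : K) : x ^ coprimePart p d = 1 ↔ x ^ d = 1 := by
  conv_rhs => rw [← Nat.ordProj_mul_ordCompl_eq_self d p]
  rw [ExpChar.pow_prime_pow_mul_eq_one_iff, coprimePart_eq_ordCompl]

lemma ncard_setOf_pow_eq_one [IsAlgClosed K] {d : ℕ} (hd : 0 < d) :
    {x : K | x ^ d = 1}.ncard = coprimePart p d := by
  have hpos : 0 < coprimePart p d := by
    rw [coprimePart_eq_ordCompl]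
    exact Nat.ordCompl_pos p hd.ne'
  have : NeZero (coprimePart p d : K) := by
    rw [neZero_iff, Ne, CharP.cast_eq_zero_iff K p, coprimePart_eq_ordCompl]
    exact Nat.not_dvd_ordCompl hp.out hd.ne'
  obtain ⟨ω, hω⟩ := HasEnoughRootsOfUnity.exists_primitiveRoot K (coprimePart p d)
  have hset : {x : K | x ^ d = 1} = Polynomial.nthRootsFinset (coprimePart p d) (1 : K) := by
    ext x
    simp [Polynomial.mem_nthRootsFinset hpos, pow_coprimePart_eq_one_iff]
  rw [hset, Set.ncard_coe_finset, hω.card_nthRootsFinset]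

lemma ncard_setOf_pow_eq_one_sdiff [IsAlgClosed K] {d d' : ℕ} (hd'd : d' ∣ d) (hd : 0 < d)
    (hd' : 0 < d') :
    ({x : K | x ^ d = 1} \ {x | x ^ d' = 1}).ncard = coprimePart p d - coprimePart p d' := by
  have hsub : {x : K | x ^ d' = 1} ⊆ {x | x ^ d = 1} := fun _ => pow_eq_one_of_dvd hd'd
  rw [Set.ncard_sdiff hsub (finite_setOf_pow_eq_one hd'), ncard_setOf_pow_eq_one p hd,
    ncard_setOf_pow_eq_one p hd']

end RootsOfUnity

namespace CharData

variable {K : Type*} [Field K] {n h : ℕ} {ζ : PowerSeries K} {b e : ℕ → ℕ}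

lemma e_pos (hcd : CharData K n ζ h b e) (hn : 0 < n) {j : ℕ} (hj : j ≤ h) : 0 < e j := by
  induction j with
  | zero => rw [hcd.1]; exact hn
  | succ j ih =>
    rw [hcd.2.2.2.2.2 j (by omega)]
    exact Nat.gcd_pos_of_pos_left _ (ih (by omega))

lemma e_succ_dvd (hcd : CharData K n ζ h b e) {j : ℕ} (hj : j < h) : e (j + 1) ∣ e j := by
  rw [hcd.2.2.2.2.2 j hj]
  exact Nat.gcd_dvd_left _ _

lemma e_dvd (hcd : CharData K n ζ h b e) {j : ℕ} (hj : j ≤ h) : e j ∣ n := by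
  induction j with
  | zero => rw [hcd.1]
  | succ j ih => exact (hcd.e_succ_dvd (by omega)).trans (ih (by omega))

lemma e_dvd_b (hcd : CharData K n ζ h b e) {j : ℕ} (hj : j ≤ h) : e j ∣ b j := by
  cases j with
  | zero => rw [hcd.2.1]; exact dvd_zero _
  | succ j =>
    rw [hcd.2.2.2.2.2 j hj]
    exact Nat.gcd_dvd_right _ _

lemma dvd_of_lt_b_succ (hcd : CharData K n ζ h b e) {j k : ℕ} (hj : j < h)
    (hk : PowerSeries.coeff k ζ ≠ 0) (hlt : k < b (j + 1)) : e j ∣ k := by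
  by_contra hnd
  exact absurd ((hcd.2.2.2.2.1 j hj).2 ⟨hk, hnd⟩) (not_le.mpr hlt)

lemma b_lt_b_succ (hcd : CharData K n ζ h b e) {j : ℕ} (hj : j < h) : b j < b (j + 1) := by
  have hnd : ¬ e j ∣ b (j + 1) := (hcd.2.2.2.2.1 j hj).1.2
  refine lt_of_le_of_ne ?_ fun hb => hnd (hb ▸ hcd.e_dvd_b hj.le)
  cases j with
  | zero => rw [hcd.2.1]; exact Nat.zero_le _
  | succ i =>
    exact (hcd.2.2.2.2.1 i (by omega)).2
      ⟨(hcd.2.2.2.2.1 (i + 1) hj).1.1, fun hdvd => hnd ((hcd.e_succ_dvd (by omega)).trans hdvd)⟩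

lemma b_le_b (hcd : CharData K n ζ h b e) {i j : ℕ} (hij : i ≤ j) (hj : j ≤ h) : b i ≤ b j :=
  (strictMonoOn_Iic_of_lt_succ (ψ := b) fun _ hk => hcd.b_lt_b_succ hk).monotoneOn (hij.trans hj) hj hij

lemma pow_e_eq_one_iff (hcd : CharData K n ζ h b e) {x : K} (hx : x ^ n = 1) {r : ℕ}
    (hr : r ≤ h) (P : ℕ → Prop) (hP : ∀ i ≤ b r, P i)
    (hP' : r < h → ∀ i, P i → i < b (r + 1)) :
    x ^ e r = 1 ↔ ∀ i, PowerSeries.coeff i ζ ≠ 0 → P i → x ^ i = 1 := by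
  have ⟨he0, _, _, heh, hleast, hsucc⟩ := hcd
  constructor
  · intro hxe i hi hPi
    rcases hr.lt_or_eq with hrh | rfl
    · exact pow_eq_one_of_dvd (hcd.dvd_of_lt_b_succ hrh hi (hP' hrh i hPi)) hxe
    · rw [heh, pow_one] at hxe
      rw [hxe, one_pow]
  · intro H
    suffices ∀ j ≤ r, x ^ e j = 1 from this r le_rfl
    intro j hj
    induction j with
    | zero => rwa [he0]
    | succ j ih =>
      rw [hsucc j (by omega), pow_gcd_eq_one]
      refine ⟨ih (by omega), H _ (hleast j (by omega)).1.1 (hP _ ?_)⟩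
      exact hcd.b_le_b hj hr

lemma pow_e_eq_one_iff_le_order (hcd : CharData K n ζ h b e) {c : ℕ} (hc : 0 < c) {ρ x : K}
    (hρ : ρ ≠ 0) (hx : x ^ n = 1) {r : ℕ} (hr : r ≤ h) {k : ℕ} (hk : c * b r < k)
    (hk' : r < h → k ≤ c * b (r + 1)) :
    x ^ e r = 1 ↔ (k : ℕ∞) ≤ (expandPS K c (rescale (ρ * x) ζ - rescale ρ ζ)).order := by
  rw [natCast_le_order_expandPS_rescale_sub_iff hc hρ,
    hcd.pow_e_eq_one_iff hx hr (fun i => c * i < k)]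
  · exact fun i hi => lt_of_le_of_lt (Nat.mul_le_mul_left c hi) hk
  · exact fun hrh i hi => Nat.lt_of_mul_lt_mul_left (hi.trans_le (hk' hrh))

lemma order_expandPS_rescale_sub_eq_iff (hcd : CharData K n ζ h b e) {c : ℕ} (hc : 0 < c)
    {ρ x : K} (hρ : ρ ≠ 0) (hx : x ^ n = 1) {j : ℕ} (hj : j < h) :
    (expandPS K c (rescale (ρ * x) ζ - rescale ρ ζ)).order = (c * b (j + 1) : ℕ) ↔
      x ^ e j = 1 ∧ x ^ e (j + 1) ≠ 1 := by
  rw [hcd.pow_e_eq_one_iff_le_order hc hρ hx hj.le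
      (Nat.mul_lt_mul_of_pos_left (hcd.b_lt_b_succ hj) hc) (fun _ => le_rfl), ne_eq,
    hcd.pow_e_eq_one_iff_le_order hc hρ hx (r := j + 1) hj (k := c * b (j + 1) + 1) (Nat.lt_succ_self _)
      fun hj' => Nat.mul_lt_mul_of_pos_left (hcd.b_lt_b_succ hj') hc,
    Nat.cast_add_one, ENat.add_one_le_iff (ENat.natCast_ne_top _), not_lt, le_antisymm_iff, and_comm]

lemma setOf_min_order_eq_natCast (hcd : CharData K n ζ h b e) {c : ℕ} (hc : 0 < c) {ρ : K}
    (hρ : ρ ≠ 0) {i : ℕ} (hi : i < h) {a : ℕ∞} (ha : (c * b (i + 1) : ℕ) < a) :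
    {x : K | x ^ n = 1 ∧ min (expandPS K c (rescale (ρ * x) ζ - rescale ρ ζ)).order a =
      (c * b (i + 1) : ℕ)} = {x | x ^ e i = 1} \ {x | x ^ e (i + 1) = 1} := by
  ext x
  constructor
  · rintro ⟨hx, hxD⟩
    rw [min_eq_iff] at hxD
    rcases hxD with ⟨hxD, -⟩ | ⟨rfl, -⟩
    · exact (hcd.order_expandPS_rescale_sub_eq_iff hc hρ hx hi).1 hxD
    · exact absurd ha (lt_irrefl _)
  · rintro ⟨hx, hx'⟩
    have hxn := pow_eq_one_of_dvd (hcd.e_dvd hi.le) hx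
    refine ⟨hxn, ?_⟩
    rw [(hcd.order_expandPS_rescale_sub_eq_iff hc hρ hxn hi).2 ⟨hx, hx'⟩]
    exact min_eq_left ha.le

lemma setOf_min_order_eq_right (hcd : CharData K n ζ h b e) {c : ℕ} (hc : 0 < c) {ρ : K}
    (hρ : ρ ≠ 0) {r : ℕ} (hr : r ≤ h) {a : ℕ} (ha : c * b r < a)
    (ha' : r < h → a ≤ c * b (r + 1)) :
    {x : K | x ^ n = 1 ∧ min (expandPS K c (rescale (ρ * x) ζ - rescale ρ ζ)).order a = a} =
      {x | x ^ e r = 1} := by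
  ext x
  refine ⟨fun ⟨hx, hxD⟩ => ?_, fun hx => ?_⟩
  · exact (hcd.pow_e_eq_one_iff_le_order hc hρ hx hr ha ha').2 (min_eq_right_iff.1 hxD)
  · have hxn := pow_eq_one_of_dvd (hcd.e_dvd hr) hx
    exact ⟨hxn, min_eq_right_iff.2 ((hcd.pow_e_eq_one_iff_le_order hc hρ hxn hr ha ha').1 hx)⟩

end CharData

lemma natCast_div_lt_natCast_div_mul_iff {c n : ℕ} (hc : 0 < c) (hn : 0 < n) (k a : ℕ) :
    (k : ℚ) / n < (a : ℚ) / (c * n : ℕ) ↔ c * k < a := by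
  rw [Nat.cast_mul, ← div_div, div_lt_div_iff_of_pos_right (by positivity),
    lt_div_iff₀ (by positivity)]
  norm_cast
  rw [mul_comm]

lemma natCast_div_mul_le_natCast_div_iff {c n : ℕ} (hc : 0 < c) (hn : 0 < n) (k a : ℕ) :
    (a : ℚ) / (c * n : ℕ) ≤ (k : ℚ) / n ↔ a ≤ c * k := by
  rw [← not_lt, natCast_div_lt_natCast_div_mul_iff hc hn, not_lt]

theorem statement14_general
    (K : Type*) [Field K] [IsAlgClosed K]
    (p : ℕ) [Fact p.Prime] [CharP K p]
    (n m : ℕ) (hn : 0 < n) (hm : 0 < m)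
    (ζ η : PowerSeries K)
    (N : ℕ) (hN : N = Nat.lcm n m)
    -- `N·α` is the (finite, positive) maximum of the orders of the differences of
    -- the rescaled and expanded Newton–Puiseux roots of `f` and `g`:
    (a : ℕ)
    (hmax : IsGreatest
      {o : ℕ∞ | ∃ ρ σ : K, ρ ^ n = 1 ∧ σ ^ m = 1 ∧
        PowerSeries.order
          (expandPS K (N / n) (PowerSeries.rescale ρ ζ) -
            expandPS K (N / m) (PowerSeries.rescale σ η)) = o}
      (a : ℕ∞))
    (α : ℚ) (hα : α = (a : ℚ) / (N : ℚ))
    -- characteristic data of `ζ` with respect to `n`: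
    (h : ℕ) (b e : ℕ → ℕ) (hcd : CharData K n ζ h b e)
    -- `r` is the (unique) index such that `b r / n < α ≤ b (r+1) / n`
    -- (the right-hand inequality being vacuous for `r = h` since `b (h+1) = ∞`):
    (r : ℕ) (hrh : r ≤ h)
    (hrlt : ((b r : ℚ) / (n : ℚ)) < α)
    (hrle : r < h → α ≤ ((b (r + 1) : ℚ) / (n : ℚ))) :
    (∀ j, 1 ≤ j → j ≤ r →
      Set.ncard {ρ : K | ρ ^ n = 1 ∧
          PowerSeries.order
            (expandPS K (N / n) (PowerSeries.rescale ρ ζ) - expandPS K (N / m) η) =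
          ((N / n * b j : ℕ) : ℕ∞)} =
        coprimePart p (e (j - 1)) - coprimePart p (e j)) ∧
    Set.ncard {ρ : K | ρ ^ n = 1 ∧
        PowerSeries.order
          (expandPS K (N / n) (PowerSeries.rescale ρ ζ) - expandPS K (N / m) η) =
        (a : ℕ∞)} =
      coprimePart p (e r) := by
  have hN0 : 0 < N := hN ▸ Nat.lcm_pos hn hm
  have hcn : N / n * n = N := Nat.div_mul_cancel (hN ▸ Nat.dvd_lcm_left n m)
  have hdm : N / m * m = N := Nat.div_mul_cancel (hN ▸ Nat.dvd_lcm_right n m)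
  set c := N / n
  have hc : 0 < c := Nat.pos_of_mul_pos_right (hcn ▸ hN0)
  rw [hα, ← hcn] at hrlt hrle
  replace hrlt : c * b r < a := (natCast_div_lt_natCast_div_mul_iff hc hn _ _).1 hrlt
  replace hrle : r < h → a ≤ c * b (r + 1) :=
    fun hr => (natCast_div_mul_le_natCast_div_iff hc hn _ _).1 (hrle hr)
  obtain ⟨ρ₁, hρ₁, hρ₁0, hmin⟩ := exists_rescale_order_sub_eq_min (hcn.trans hdm.symm) hn hm
    (Nat.pos_of_mul_pos_right (hdm ▸ hN0)) hmax
  have hcount : ∀ k : ℕ∞, {ρ : K | ρ ^ n = 1 ∧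
      (expandPS K c (rescale ρ ζ) - expandPS K (N / m) η).order = k}.ncard =
      {x | x ^ n = 1 ∧ min (expandPS K c (rescale (ρ₁ * x) ζ - rescale ρ₁ ζ)).order a = k}.ncard :=
    fun k => by
      rw [← ncard_setOf_pow_eq_one_and_mul hρ₁0 hρ₁]
      exact congrArg _ (Set.ext fun x => and_congr_right fun hx => by rw [hmin x hx])
  refine ⟨fun j hj1 hjr => ?_, ?_⟩
  · obtain ⟨i, rfl⟩ : ∃ i, j = i + 1 := ⟨j - 1, by omega⟩
    have hih : i < h := by omega
    have hcb : c * b (i + 1) < a := (Nat.mul_le_mul_left c (hcd.b_le_b hjr hrh)).trans_lt hrlt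
    rw [hcount, hcd.setOf_min_order_eq_natCast hc hρ₁0 hih (by exact_mod_cast hcb),
      Nat.add_sub_cancel, ncard_setOf_pow_eq_one_sdiff p (hcd.e_succ_dvd hih)
        (hcd.e_pos hn hih.le) (hcd.e_pos hn hih)]
  · rw [hcount, hcd.setOf_min_order_eq_right hc hρ₁0 hrh hrlt hrle,
      ncard_setOf_pow_eq_one p (hcd.e_pos hn hrh)]

/-- counting lemma for two branches, characteristic `p > 0`.
With `D(ρ) = ord_s( (ζ(ρ·))(s^{N/n}) − η(s^{N/m}) )`:
(a) for `1 ≤ j ≤ r`, the number of `n`-th roots of unity `ρ` with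
`D(ρ) = N·b_j/n` equals `e_{j−1}[:p] − e_j[:p]`;
(b) the number of those with `D(ρ) = N·α` equals `e_r[:p]`. -/
theorem statement14
    (K : Type*) [Field K] [IsAlgClosed K]
    (p : ℕ) [Fact p.Prime] [CharP K p]
    (n m : ℕ) (hn : 0 < n) (hm : 0 < m)
    (ζ η : PowerSeries K) (hζ : ζ ≠ 0) (hη : η ≠ 0)
    (hminζ : MinimalDenom K n ζ) (hminη : MinimalDenom K m η)
    (f g : Polynomial (PowerSeries K))
    (hfmonic : f.Monic) (hgmonic : g.Monic)
    (hfdeg : f.natDegree = n) (hgdeg : g.natDegree = m)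
    (hfroot : IsNPRoot K n f ζ) (hgroot : IsNPRoot K m g η)
    (hfg : f ≠ g)
    (N : ℕ) (hN : N = Nat.lcm n m)
    -- `N·α` is the (finite, positive) maximum of the orders of the differences of
    -- the rescaled and expanded Newton–Puiseux roots of `f` and `g`:
    (a : ℕ) (ha : 0 < a)
    (hmax : IsGreatest
      {o : ℕ∞ | ∃ ρ σ : K, ρ ^ n = 1 ∧ σ ^ m = 1 ∧
        PowerSeries.order
          (expandPS K (N / n) (PowerSeries.rescale ρ ζ) -
            expandPS K (N / m) (PowerSeries.rescale σ η)) = o}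
      (a : ℕ∞))
    (α : ℚ) (hα : α = (a : ℚ) / (N : ℚ))
    -- characteristic data of `ζ` with respect to `n`:
    (h : ℕ) (b e : ℕ → ℕ) (hcd : CharData K n ζ h b e)
    -- `r` is the (unique) index such that `b r / n < α ≤ b (r+1) / n`
    -- (the right-hand inequality being vacuous for `r = h` since `b (h+1) = ∞`):
    (r : ℕ) (hrh : r ≤ h)
    (hrlt : ((b r : ℚ) / (n : ℚ)) < α)
    (hrle : r < h → α ≤ ((b (r + 1) : ℚ) / (n : ℚ))) :
    (∀ j, 1 ≤ j → j ≤ r →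
      Set.ncard {ρ : K | ρ ^ n = 1 ∧
          PowerSeries.order
            (expandPS K (N / n) (PowerSeries.rescale ρ ζ) - expandPS K (N / m) η) =
          ((N / n * b j : ℕ) : ℕ∞)} =
        coprimePart p (e (j - 1)) - coprimePart p (e j)) ∧
    Set.ncard {ρ : K | ρ ^ n = 1 ∧
        PowerSeries.order
          (expandPS K (N / n) (PowerSeries.rescale ρ ζ) - expandPS K (N / m) η) =
        (a : ℕ∞)} =
      coprimePart p (e r) :=
  statement14_general K p n m hn hm ζ η N hN a hmax α hα h b e hcd r hrh hrlt hrle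

end PaperStmt
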